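/- Let i ≥ 5 and let w_1, w_2 be words of the Jacquard language J_l, with l ≥ i−3, satisfying: (1) β_i(w_1) > β_i(w_2); (2) β_{i-1}(w_1') ≥ β_{i-1}(w_2'); (3) β_i(w_1) − β_{i-1}(w_1') ≥ β_i(w_2) − β_{i-1}(w_2'). Then, for every integer k ≥ 1 and every word w of length k such that both w_1 w and w_2 w belong to J_{k+l}, one has β_{i+k}(w_1 w) > β_{i+k}(w_2 w). (Lemma 5.6 of the paper.) -/

import Mathlib

/-- The Jacquard languages: `Jacquard 0 = {ε}`, `Jacquard 1 = {a₀}`, and, for `n ≥ 2`,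
`Jacquard n = Jacquard (n-1)·a₀ ∪ ⋃_{1 ≤ j ≤ n-1} Jacquard (n-j)·(a₁a₂⋯a_j)`,
where a letter `a_j` is modeled by the natural number `j` and a word by a list. -/
def Jacquard : ℕ → Set (List ℕ)
  | 0 => {[]}
  | 1 => {[0]}
  | n + 2 =>
      ((· ++ [0]) '' Jacquard (n + 1)) ∪
        ⋃ (j : ℕ) (_ : 1 ≤ j ∧ j ≤ n + 1),
          (· ++ (List.range j).map (· + 1)) '' Jacquard (n + 2 - j)
  termination_by n => n
  decreasing_by all_goals omega

/-- Jean's functions `β_i` on words (the shift `w'` of a word is `w.dropLast`):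
`β₂ = 1`, `β₃ = 2`, `β₄ = 3`, and, for `i ≥ 5`,
`β_i(w) = β_{i-1}(w') + β_{i-2}(w'')` if the last letter of `w` is `a₁`,
`β_i(w) = 2β_{i-1}(w') - β_{i-2}(w'')` if the last letter of `w` is `a_k`, `k ≥ 2`,
`β_i(w) = β_{i-1}(w') + 1` otherwise (i.e. `w` empty or ending with `a₀`).
(The unused values `β₀` and `β₁` are set to `0`.) -/
def beta : ℕ → List ℕ → ℤ
  | 0, _ => 0
  | 1, _ => 0
  | 2, _ => 1
  | 3, _ => 2
  | 4, _ => 3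
  | i + 5, w =>
      match w.getLast? with
      | some 1 => beta (i + 4) w.dropLast + beta (i + 3) w.dropLast.dropLast
      | some (_ + 2) => 2 * beta (i + 4) w.dropLast - beta (i + 3) w.dropLast.dropLast
      | _ => beta (i + 4) w.dropLast + 1

/-!
Appending a letter `a` to a word `u` transforms the pair `(x, y) = (β_n(u), β_{n-1}(u'))` into
`(x + 1, x)`, `(x + y, x)` or `(2x - y, x)` according as `a = a₀`, `a = a₁` or `a = a_j` with
`j ≥ 2`. Each of these maps preserves the three inequalities `x₁ > x₂`, `y₁ ≥ y₂`,
`x₁ - y₁ ≥ x₂ - y₂` between the pairs of two words (for the third map, write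
`2x - y = x + (x - y)`), so they persist along any common suffix `w`, one letter at a time.
-/

section

variable {n : ℕ} (hn : 3 ≤ n) (u : List ℕ)
include hn

lemma beta_concat_zero : beta (n + 2) (u ++ [0]) = beta (n + 1) u + 1 := by
  obtain ⟨m, rfl⟩ := Nat.exists_eq_add_of_le' hn
  show beta (m + 5) _ = _
  rw [beta, List.getLast?_concat, List.dropLast_concat]

lemma beta_concat_one :
    beta (n + 2) (u ++ [1]) = beta (n + 1) u + beta n u.dropLast := by
  obtain ⟨m, rfl⟩ := Nat.exists_eq_add_of_le' hn
  show beta (m + 5) _ = _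
  rw [beta, List.getLast?_concat, List.dropLast_concat]

lemma beta_concat_add_two (j : ℕ) :
    beta (n + 2) (u ++ [j + 2]) = 2 * beta (n + 1) u - beta n u.dropLast := by
  obtain ⟨m, rfl⟩ := Nat.exists_eq_add_of_le' hn
  show beta (m + 5) _ = _
  rw [beta, List.getLast?_concat, List.dropLast_concat]

end

structure BetaDominates (n : ℕ) (u v : List ℕ) : Prop where
  lt : beta (n + 1) v < beta (n + 1) u
  dropLast_le : beta n v.dropLast ≤ beta n u.dropLast
  sub_le : beta (n + 1) v - beta n v.dropLast ≤ beta (n + 1) u - beta n u.dropLast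

namespace BetaDominates

variable {n : ℕ} {u v : List ℕ}

theorem concat (hn : 3 ≤ n) (h : BetaDominates n u v) (a : ℕ) :
    BetaDominates (n + 1) (u ++ [a]) (v ++ [a]) := by
  obtain ⟨hlt, hle, hsub⟩ := h
  refine ⟨?_, ?_, ?_⟩ <;> rcases a with _ | _ | j <;>
    simp only [List.dropLast_concat, beta_concat_zero hn, beta_concat_one hn,
      beta_concat_add_two hn] <;>
    linarith

theorem append (hn : 3 ≤ n) (h : BetaDominates n u v) (w : List ℕ) :
    BetaDominates (n + w.length) (u ++ w) (v ++ w) := by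
  induction w using List.reverseRecOn with
  | nil => simpa using h
  | append_singleton w a ih =>
    simpa only [← List.append_assoc, List.length_append, List.length_singleton, ← Nat.add_assoc]
      using (ih.concat (by omega) a)

end BetaDominates

theorem beta_append_mono_general (i : ℕ) (hi : 5 ≤ i)
    (w₁ w₂ : List ℕ)
    (h1 : beta i w₁ > beta i w₂)
    (h2 : beta (i - 1) w₁.dropLast ≥ beta (i - 1) w₂.dropLast)
    (h3 : beta i w₁ - beta (i - 1) w₁.dropLast ≥ beta i w₂ - beta (i - 1) w₂.dropLast)
    (k : ℕ) (w : List ℕ) (hw : w.length = k) :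
    beta (i + k) (w₁ ++ w) > beta (i + k) (w₂ ++ w) := by
  obtain ⟨n, rfl⟩ : ∃ n, i = n + 1 := ⟨i - 1, by omega⟩
  rw [Nat.add_sub_cancel] at h2 h3
  have h : BetaDominates n w₁ w₂ := ⟨h1, h2, h3⟩
  have := ((h.append (by omega) w).lt)
  rwa [hw, Nat.add_right_comm] at this

/-- Lemma 5.6: let `i ≥ 5` and let `w₁, w₂ ∈ J_l`, `l ≥ i - 3`, satisfy
`β_i(w₁) > β_i(w₂)`, `β_{i-1}(w₁') ≥ β_{i-1}(w₂')`, and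
`β_i(w₁) - β_{i-1}(w₁') ≥ β_i(w₂) - β_{i-1}(w₂')`. Then, for every `k ≥ 1` and every
word `w` of length `k` such that `w₁w` and `w₂w` belong to `J_{k+l}`, one has
`β_{i+k}(w₁w) > β_{i+k}(w₂w)`. -/
theorem beta_append_mono (i : ℕ) (hi : 5 ≤ i) (l : ℕ) (hl : i - 3 ≤ l)
    (w₁ w₂ : List ℕ) (hw₁ : w₁ ∈ Jacquard l) (hw₂ : w₂ ∈ Jacquard l)
    (h1 : beta i w₁ > beta i w₂)
    (h2 : beta (i - 1) w₁.dropLast ≥ beta (i - 1) w₂.dropLast)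
    (h3 : beta i w₁ - beta (i - 1) w₁.dropLast ≥ beta i w₂ - beta (i - 1) w₂.dropLast)
    (k : ℕ) (hk : 1 ≤ k) (w : List ℕ) (hw : w.length = k)
    (hw₁w : w₁ ++ w ∈ Jacquard (k + l)) (hw₂w : w₂ ++ w ∈ Jacquard (k + l)) :
    beta (i + k) (w₁ ++ w) > beta (i + k) (w₂ ++ w) :=
  beta_append_mono_general i hi w₁ w₂ h1 h2 h3 k w hw
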